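/- Let f : (0,∞) → ℝ be continuous with f(v) = O(v^{1+δ}) as v → 0⁺ for some δ > 0, and suppose ∫₁^∞ |log(1 - e^{-v})|·|f(v)| dv < ∞ with f bounded on [1,∞). Then F(τ) = ∫₀^∞ log(1 - e^{-τv}) f(v) dv satisfies F(τ) → 0 as τ → ∞; more precisely F(τ) = O(τ^{-δ}) + O(e^{-τ}). -/

import Mathlib

/-!
Write `φ(x) = -log(1 - e^{-x}) ≥ 0`. From `-log(1 - t) ≤ t / (1 - t)` and `e^x - 1 ≥ x` one gets
`φ(x) ≤ e^{-x} (1 + 1/x)`, so `φ(u) u^s` is dominated by two Gamma integrands and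
`I = ∫₀^∞ φ(u) u^{1+δ} du` is finite. The hypotheses on `f` give `|f(v)| ≤ K v^{1+δ}` on all of
`(0, ∞)`: near `0` by the `O`-bound, on `[ε, 1]` by continuity, on `[1, ∞)` by boundedness.
Substituting `u = τ v` then yields `|F(τ)| ≤ K ∫₀^∞ φ(τ v) v^{1+δ} dv = K I τ^{-(2+δ)}`.
-/

open MeasureTheory Real Filter Set Topology Asymptotics

lemma one_sub_exp_neg_pos {x : ℝ} (hx : 0 < x) : 0 < 1 - exp (-x) :=
  sub_pos.2 (exp_lt_one_iff.2 (neg_lt_zero.2 hx))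

lemma neg_log_one_sub_exp_neg_nonneg {x : ℝ} (hx : 0 ≤ x) : 0 ≤ -log (1 - exp (-x)) :=
  neg_nonneg.2 <| log_nonpos (sub_nonneg.2 (exp_le_one_iff.2 (neg_nonpos.2 hx)))
    (sub_le_self _ (exp_pos _).le)

lemma neg_log_one_sub_exp_neg_le {x : ℝ} (hx : 0 < x) :
    -log (1 - exp (-x)) ≤ exp (-x) * (1 + x⁻¹) := by
  have hexp : exp (-x) * exp x = 1 := by rw [← exp_add, neg_add_cancel, exp_zero]
  have hpos := one_sub_exp_neg_pos hx
  have hlog := one_sub_inv_le_log_of_pos hpos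
  have hcmp : (1 - exp (-x))⁻¹ ≤ 1 + exp (-x) * (1 + x⁻¹) := by
    rw [inv_le_iff_one_le_mul₀ hpos]
    have := mul_le_mul_of_nonneg_left (add_one_le_exp x) (exp_pos (-x)).le
    field_simp
    nlinarith [exp_pos (-x)]
  linarith

lemma integrableOn_neg_log_one_sub_exp_neg_mul_rpow {s : ℝ} (hs : 0 < s) :
    IntegrableOn (fun u => -log (1 - exp (-u)) * u ^ s) (Ioi 0) := by
  have hgamma : IntegrableOn
      (fun u => exp (-u) * u ^ ((s + 1) - 1) + exp (-u) * u ^ (s - 1)) (Ioi 0) :=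
    (GammaIntegral_convergent (by linarith)).add (GammaIntegral_convergent hs)
  refine hgamma.mono' ?_ ?_
  · refine ContinuousOn.aestronglyMeasurable ?_ measurableSet_Ioi
    refine ContinuousOn.mul ?_ (continuousOn_id.rpow_const fun u hu => Or.inl (ne_of_gt hu))
    exact (ContinuousOn.log (by fun_prop) fun u hu => (one_sub_exp_neg_pos hu).ne').neg
  · filter_upwards [ae_restrict_mem measurableSet_Ioi] with u (hu : 0 < u)
    have hpow : u ^ s * u⁻¹ = u ^ (s - 1) := by rw [rpow_sub_one hu.ne', div_eq_mul_inv]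
    rw [norm_mul, norm_of_nonneg (neg_log_one_sub_exp_neg_nonneg hu.le),
      norm_of_nonneg (rpow_nonneg hu.le s), add_sub_cancel_right, ← hpow]
    calc -log (1 - exp (-u)) * u ^ s ≤ exp (-u) * (1 + u⁻¹) * u ^ s :=
          mul_le_mul_of_nonneg_right (neg_log_one_sub_exp_neg_le hu) (rpow_nonneg hu.le s)
      _ = _ := by ring

section Scaling

variable (g : ℝ → ℝ) (s : ℝ) {a : ℝ}

lemma comp_mul_left_mul_rpow_eqOn (ha : 0 < a) :
    EqOn (fun v => g (a * v) * v ^ s) (fun v => a ^ (-s) * (g (a * v) * (a * v) ^ s)) (Ioi 0) := by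
  intro v (hv : 0 < v)
  simp only
  rw [mul_rpow ha.le hv.le, rpow_neg ha.le]
  field_simp

lemma MeasureTheory.IntegrableOn.comp_mul_left_mul_rpow (ha : 0 < a)
    (hg : IntegrableOn (fun u => g u * u ^ s) (Ioi 0)) :
    IntegrableOn (fun v => g (a * v) * v ^ s) (Ioi 0) := by
  refine IntegrableOn.congr_fun (Integrable.const_mul ?_ _)
    (comp_mul_left_mul_rpow_eqOn g s ha).symm measurableSet_Ioi
  exact (integrableOn_Ioi_comp_mul_left_iff (fun u => g u * u ^ s) 0 ha).2 (by simpa using hg)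

lemma integral_comp_mul_left_mul_rpow_Ioi (ha : 0 < a) :
    ∫ v in Ioi 0, g (a * v) * v ^ s = a ^ (-(s + 1)) * ∫ u in Ioi 0, g u * u ^ s := by
  rw [setIntegral_congr_fun measurableSet_Ioi (comp_mul_left_mul_rpow_eqOn g s ha),
    integral_const_mul, integral_comp_mul_left_Ioi (fun u => g u * u ^ s) 0 ha, mul_zero,
    smul_eq_mul, ← mul_assoc, ← rpow_neg_one, ← rpow_add ha]
  ring_nf

end Scaling

lemma exists_abs_le_of_continuousOn_Icc {f : ℝ → ℝ} {a b : ℝ} (hf : ContinuousOn f (Icc a b))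
    (hbdd : ∃ M, ∀ v ≥ b, |f v| ≤ M) : ∃ A, ∀ v ≥ a, |f v| ≤ A := by
  obtain ⟨B, hB⟩ := isCompact_Icc.exists_bound_of_continuousOn hf
  obtain ⟨M, hM⟩ := hbdd
  refine ⟨max B M, fun v hv => ?_⟩
  rcases le_total v b with hvb | hvb
  · exact (hB v ⟨hv, hvb⟩).trans (le_max_left B M)
  · exact (hM v hvb).trans (le_max_right B M)

lemma exists_abs_le_mul_rpow_of_isBigO {f : ℝ → ℝ} {p : ℝ} (hp : 0 ≤ p)
    (hf : ContinuousOn f (Ioi 0)) (h0 : f =O[𝓝[>] 0] fun v => v ^ p)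
    (hbdd : ∃ M, ∀ v ≥ 1, |f v| ≤ M) : ∃ K, 0 ≤ K ∧ ∀ v > 0, |f v| ≤ K * v ^ p := by
  obtain ⟨c, hc, hcO⟩ := h0.exists_pos
  obtain ⟨ε, hε : 0 < ε, hnear⟩ := mem_nhdsGT_iff_exists_Ioo_subset.1 hcO.bound
  obtain ⟨A, hA⟩ := exists_abs_le_of_continuousOn_Icc
    (hf.mono fun v hv => hε.trans_le hv.1) hbdd
  have hεp : 0 < ε ^ p := rpow_pos_of_pos hε p
  refine ⟨max c (A / ε ^ p), le_max_of_le_left hc.le, fun v hv => ?_⟩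
  have hvp : 0 ≤ v ^ p := rpow_nonneg hv.le p
  rcases lt_or_ge v ε with hvε | hvε
  · have hfv : |f v| ≤ c * v ^ p := by
      simpa [abs_of_nonneg hvp] using hnear ⟨hv, hvε⟩
    exact hfv.trans (mul_le_mul_of_nonneg_right (le_max_left _ _) hvp)
  · have hA0 : 0 ≤ A := (abs_nonneg _).trans (hA v hvε)
    calc |f v| ≤ A / ε ^ p * ε ^ p := by rw [div_mul_cancel₀ A hεp.ne']; exact hA v hvε
      _ ≤ A / ε ^ p * v ^ p :=
        mul_le_mul_of_nonneg_left (rpow_le_rpow hε.le hvε hp) (div_nonneg hA0 hεp.le)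
      _ ≤ max c (A / ε ^ p) * v ^ p := mul_le_mul_of_nonneg_right (le_max_right _ _) hvp

lemma abs_integral_log_one_sub_exp_neg_mul_le {f : ℝ → ℝ} {s K τ : ℝ} (hs : 0 < s) (hτ : 0 < τ)
    (hf : ∀ v > 0, |f v| ≤ K * v ^ s) :
    |∫ v in Ioi 0, log (1 - exp (-τ * v)) * f v| ≤
      K * (∫ u in Ioi 0, -log (1 - exp (-u)) * u ^ s) * τ ^ (-(s + 1)) := by
  set g : ℝ → ℝ := fun u => -log (1 - exp (-u))
  have hdom : ∀ᵐ v ∂volume.restrict (Ioi 0),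
      ‖log (1 - exp (-τ * v)) * f v‖ ≤ K * (g (τ * v) * v ^ s) := by
    filter_upwards [ae_restrict_mem measurableSet_Ioi] with v (hv : 0 < v)
    have hg : 0 ≤ g (τ * v) := neg_log_one_sub_exp_neg_nonneg (mul_pos hτ hv).le
    rw [norm_mul, norm_eq_abs, norm_eq_abs, neg_mul, ← abs_neg, abs_of_nonneg hg]
    calc g (τ * v) * |f v| ≤ g (τ * v) * (K * v ^ s) := mul_le_mul_of_nonneg_left (hf v hv) hg
      _ = K * (g (τ * v) * v ^ s) := by ring
  have hint := ((integrableOn_neg_log_one_sub_exp_neg_mul_rpow hs).comp_mul_left_mul_rpow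
    g s hτ).const_mul K
  calc |∫ v in Ioi 0, log (1 - exp (-τ * v)) * f v|
      ≤ ∫ v in Ioi 0, K * (g (τ * v) * v ^ s) := norm_integral_le_of_norm_le hint hdom
    _ = _ := by rw [integral_const_mul, integral_comp_mul_left_mul_rpow_Ioi g s hτ]; ring

theorem relative_eta_low_temperature (f : ℝ → ℝ) (δ : ℝ) (hδ : 0 < δ)
    (hcont : ContinuousOn f (Ioi 0))
    (h0 : (fun v => f v) =O[𝓝[>] (0:ℝ)] fun v => v ^ (1 + δ))
    (hbdd : ∃ M : ℝ, ∀ v ≥ (1:ℝ), |f v| ≤ M) :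
    Tendsto (fun τ => ∫ v in Ioi (0:ℝ), Real.log (1 - Real.exp (-τ * v)) * f v)
        atTop (𝓝 0) ∧
    ∃ C : ℝ, ∀ τ ≥ (1:ℝ),
        |∫ v in Ioi (0:ℝ), Real.log (1 - Real.exp (-τ * v)) * f v| ≤
          C * (τ ^ (-δ) + Real.exp (-τ)) := by
  obtain ⟨K, hK0, hK⟩ := exists_abs_le_mul_rpow_of_isBigO (by linarith) hcont h0 hbdd
  set C := K * ∫ u in Ioi 0, -log (1 - exp (-u)) * u ^ (1 + δ)
  have hC : 0 ≤ C := mul_nonneg hK0 <| setIntegral_nonneg measurableSet_Ioi fun u hu =>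
    mul_nonneg (neg_log_one_sub_exp_neg_nonneg (le_of_lt hu)) (rpow_nonneg (le_of_lt hu) _)
  have hF : ∀ τ > 0, |∫ v in Ioi (0:ℝ), log (1 - exp (-τ * v)) * f v| ≤ C * τ ^ (-(1 + δ + 1)) :=
    fun τ hτ => abs_integral_log_one_sub_exp_neg_mul_le (by linarith) hτ hK
  refine ⟨squeeze_zero_norm' (a := fun τ => C * τ ^ (-(1 + δ + 1))) ?_ ?_, C,
    fun τ hτ => (hF τ (by linarith)).trans ?_⟩
  · filter_upwards [eventually_gt_atTop 0] with τ hτ using hF τ hτ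
  · simpa using (tendsto_rpow_neg_atTop (by linarith : 0 < 1 + δ + 1)).const_mul C
  · refine mul_le_mul_of_nonneg_left ?_ hC
    calc τ ^ (-(1 + δ + 1)) ≤ τ ^ (-δ) := rpow_le_rpow_of_exponent_le hτ (by linarith)
      _ ≤ τ ^ (-δ) + exp (-τ) := le_add_of_nonneg_right (exp_pos _).le
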